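/- Let n ≥ 2, let p : {1,...,n} → [0,1] be a probability vector, and let s : {1,...,n} → [0,1] satisfy Σ_y s(y) = 1 and s(ŷ) = max_y s(y) ≥ 1/n for some label ŷ. Then Σ_y p(y)(1 − s(y)) − (1 − max_y p(y)) ≥ (1/n)·(max_y p(y) − p(ŷ)). -/
import Mathlib


/-- Maximum of a real-valued function over `Fin n`, `n > 0`. -/
noncomputable def fmax {n : ℕ} (hn : 0 < n) (f : Fin n → ℝ) : ℝ :=
  Finset.univ.sup' (Finset.univ_nonempty_iff.mpr ⟨⟨0, hn⟩⟩) f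

theorem stmt_4 {n : ℕ} (hn : 2 ≤ n) (p s : Fin n → ℝ)
    (hp0 : ∀ y, 0 ≤ p y) (hp1 : ∀ y, p y ≤ 1) (hpsum : ∑ y, p y = 1)
    (hs0 : ∀ y, 0 ≤ s y) (hs1 : ∀ y, s y ≤ 1) (hssum : ∑ y, s y = 1)
    (yhat : Fin n) (hsmax : s yhat = fmax (by omega) s) (hs1n : (1 : ℝ) / n ≤ s yhat) :
    (1 : ℝ) / n * (fmax (by omega) p - p yhat)
      ≤ ∑ y, p y * (1 - s y) - (1 - fmax (by omega) p) := by
  have hn0 : 0 < n := by omega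
  set M : ℝ := fmax hn0 p with hMdef
  have hpM : ∀ y, p y ≤ M := fun y => Finset.le_sup' p (Finset.mem_univ y)
  have hsy : ∀ y, s y ≤ s yhat := by
    intro y; rw [hsmax]; exact Finset.le_sup' s (Finset.mem_univ y)
  have hsum : ∑ y, p y * (1 - s y) = 1 - ∑ y, p y * s y := by
    simp [mul_sub, Finset.sum_sub_distrib, hpsum]
  have hsplit : ∑ y, p y * s y
      = p yhat * s yhat + ∑ y ∈ Finset.univ.erase yhat, p y * s y :=
    (Finset.add_sum_erase _ _ (Finset.mem_univ yhat)).symm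
  have hssplit : ∑ y ∈ Finset.univ.erase yhat, s y = 1 - s yhat := by
    have := Finset.add_sum_erase Finset.univ s (Finset.mem_univ yhat)
    rw [hssum] at this
    linarith
  have hbound : ∑ y ∈ Finset.univ.erase yhat, p y * s y
      ≤ M * (1 - s yhat) := by
    calc ∑ y ∈ Finset.univ.erase yhat, p y * s y
        ≤ ∑ y ∈ Finset.univ.erase yhat, M * s y := by
          apply Finset.sum_le_sum
          intro i _
          exact mul_le_mul_of_nonneg_right (hpM i) (hs0 i)
      _ = M * (1 - s yhat) := by rw [← Finset.mul_sum, hssplit]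
  have hkey : ∑ y, p y * s y ≤ M - s yhat * (M - p yhat) := by
    rw [hsplit]; nlinarith [hbound]
  have hMp : 0 ≤ M - p yhat := by linarith [hpM yhat]
  have h2 : (1 : ℝ) / n * (M - p yhat) ≤ s yhat * (M - p yhat) :=
    mul_le_mul_of_nonneg_right hs1n hMp
  rw [hsum]
  linarith
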